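/- Let Δ be a finite fan on N ⊗ ℝ with N = ℤ^r, and let Δ_top be the finite topological space whose points are the cones of Δ and whose open sets are the subfans of Δ. Then the dimension of Δ_top, defined as the length of a maximal chain of irreducible closed subsets, equals max{dim σ | σ ∈ Δ}; in particular max{dim σ | σ ∈ Δ} is a topological invariant of Δ. -/

import Mathlib

open scoped BigOperators TensorProduct

namespace ToricFan

variable {r : ℕ}

/-- View an integer vector as a real vector. -/
def realize {r : ℕ} (v : Fin r → ℤ) : Fin r → ℝ := fun i => (v i : ℝ)

/-- The pairing of an integral linear functional `m ∈ M = Hom(N, ℤ)` with a real vector. -/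
def pair {r : ℕ} (m : Fin r → ℤ) (x : Fin r → ℝ) : ℝ := ∑ i, (m i : ℝ) * x i

lemma pair_add {r : ℕ} (a b : Fin r → ℤ) (x : Fin r → ℝ) :
    pair (a + b) x = pair a x + pair b x := by
  simp [pair, add_mul, Finset.sum_add_distrib]

lemma pair_neg {r : ℕ} (a : Fin r → ℤ) (x : Fin r → ℝ) : pair (-a) x = -pair a x := by
  simp [pair, Finset.sum_neg_distrib]

lemma pair_zero {r : ℕ} (x : Fin r → ℝ) : pair (0 : Fin r → ℤ) x = 0 := by simp [pair]

/-- The convex cone generated by a finite set of integral vectors. -/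
def coneOf {r : ℕ} (S : Finset (Fin r → ℤ)) : Set (Fin r → ℝ) :=
  { x | ∃ c : (Fin r → ℤ) → ℝ, (∀ v, 0 ≤ c v) ∧ x = ∑ v ∈ S, c v • realize v }

/-- A rational polyhedral cone. -/
def IsRationalCone {r : ℕ} (σ : Set (Fin r → ℝ)) : Prop := ∃ S, σ = coneOf S

/-- A cone is strongly convex if it contains no line through the origin. -/
def IsStronglyConvex {r : ℕ} (σ : Set (Fin r → ℝ)) : Prop := ∀ x ∈ σ, -x ∈ σ → x = 0

/-- `τ` is a face of the cone `σ`. -/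
def IsFaceOf {r : ℕ} (τ σ : Set (Fin r → ℝ)) : Prop :=
  ∃ m : (Fin r → ℝ) →ₗ[ℝ] ℝ, (∀ x ∈ σ, 0 ≤ m x) ∧ τ = {x | x ∈ σ ∧ m x = 0}

/-- A finite rational fan on `ℝ^r = N ⊗ ℝ`, `N = ℤ^r`: a finite collection of rational
strongly convex polyhedral cones, closed under taking faces, in which the intersection of
any two cones is a face of each of them. -/
structure Fan (r : ℕ) where
  cones : Set (Set (Fin r → ℝ))
  finite : cones.Finite
  rational : ∀ σ ∈ cones, IsRationalCone σ
  stronglyConvex : ∀ σ ∈ cones, IsStronglyConvex σ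
  face_mem : ∀ σ ∈ cones, ∀ τ, IsFaceOf τ σ → τ ∈ cones
  inter_face : ∀ σ ∈ cones, ∀ σ' ∈ cones, IsFaceOf (σ ∩ σ') σ ∧ IsFaceOf (σ ∩ σ') σ'

/-- The dimension of a cone: the dimension of the real span. -/
noncomputable def dimCone {r : ℕ} (σ : Set (Fin r → ℝ)) : ℕ :=
  Module.finrank ℝ (Submodule.span ℝ σ)

/-- The support `|Δ|` of a fan. -/
def Fan.support (Δ : Fan r) : Set (Fin r → ℝ) := ⋃ σ ∈ Δ.cones, σ

/-- `s = dim_ℝ ℝ|Δ|`, the dimension of the real span of the support. -/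
noncomputable def Fan.spanDim (Δ : Fan r) : ℕ :=
  Module.finrank ℝ (Submodule.span ℝ Δ.support)

/-- `Δ(1)`, the set of 1-dimensional cones of the fan. -/
def Fan.rays (Δ : Fan r) : Set (Set (Fin r → ℝ)) := {σ | σ ∈ Δ.cones ∧ dimCone σ = 1}

/-- `#(Δ(1))`, the number of 1-dimensional cones of the fan. -/
noncomputable def Fan.rayCount (Δ : Fan r) : ℕ := Δ.rays.ncard

/-- The set of 1-dimensional faces of a cone `σ`, i.e. `Δ(σ)(1)`. -/
def raysOf {r : ℕ} (σ : Set (Fin r → ℝ)) : Set (Set (Fin r → ℝ)) :=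
  {τ | IsFaceOf τ σ ∧ dimCone τ = 1}

/-- `#(Δ(σ)(1))`, the number of 1-dimensional faces of the cone `σ`. -/
noncomputable def rayCountOf {r : ℕ} (σ : Set (Fin r → ℝ)) : ℕ := (raysOf σ).ncard

/-- The finite topological space `Δ_top`: points are the cones of `Δ` and the open sets
are the subfans of `Δ` (i.e. the subsets closed under taking faces). -/
def Fan.topology (Δ : Fan r) : TopologicalSpace ↥Δ.cones where
  IsOpen U := ∀ σ ∈ U, ∀ τ : ↥Δ.cones,
    IsFaceOf (τ : Set (Fin r → ℝ)) (σ : Set (Fin r → ℝ)) → τ ∈ U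
  isOpen_univ := fun _ _ _ _ => trivial
  isOpen_inter := fun _ _ hU hV σ hσ τ hτ => ⟨hU σ hσ.1 τ hτ, hV σ hσ.2 τ hτ⟩
  isOpen_sUnion := fun S hS σ hσ τ hτ => by
    obtain ⟨U, hU, hσU⟩ := hσ
    exact ⟨U, hU, hS U hU σ hσU τ hτ⟩

/-- A simplicial cone: generated by `dim σ` linearly independent vectors. -/
def IsSimplicialCone {r : ℕ} (σ : Set (Fin r → ℝ)) : Prop :=
  ∃ S : Finset (Fin r → ℤ), σ = coneOf S ∧ S.card = dimCone σ ∧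
    LinearIndependent ℝ (fun v : S => realize (v : Fin r → ℤ))

/-- A simplicial fan. -/
def Fan.IsSimplicial (Δ : Fan r) : Prop := ∀ σ ∈ Δ.cones, IsSimplicialCone σ

/-- A nonsingular cone: generated by part of a `ℤ`-basis of `N = ℤ^r`. -/
def IsNonsingularCone {r : ℕ} (σ : Set (Fin r → ℝ)) : Prop :=
  ∃ (b : Module.Basis (Fin r) ℤ (Fin r → ℤ)) (S : Finset (Fin r → ℤ)),
    ↑S ⊆ Set.range b ∧ σ = coneOf S

/-- A nonsingular fan. -/
def Fan.IsNonsingular (Δ : Fan r) : Prop := ∀ σ ∈ Δ.cones, IsNonsingularCone σ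

/-- `v` is the primitive lattice generator of the ray `ρ`. -/
def IsPrimitiveGen {r : ℕ} (ρ : Set (Fin r → ℝ)) (v : Fin r → ℤ) : Prop :=
  ρ = coneOf {v} ∧ ∀ w : Fin r → ℤ, realize w ∈ ρ → ∃ n : ℕ, w = n • v

/-- The set of maximal cones of the fan. -/
def Fan.maximalCones (Δ : Fan r) : Set (Set (Fin r → ℝ)) :=
  {σ | σ ∈ Δ.cones ∧ ∀ τ ∈ Δ.cones, σ ⊆ τ → σ = τ}

noncomputable def Fan.maximalFinset (Δ : Fan r) : Finset (Set (Fin r → ℝ)) :=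
  (Δ.finite.subset (show Δ.maximalCones ⊆ Δ.cones from fun _ h => h.1)).toFinset

/-- `dim_ℚ (G ⊗ ℚ)`, the rational rank of an abelian group. -/
noncomputable def qdim (G : Type*) [AddCommGroup G] : ℕ :=
  Module.finrank ℚ (ℚ ⊗[ℤ] G)

section Units

/-- The group `𝒰(Δ) = |Δ|^⊥ ∩ M` of integral linear functionals vanishing on the
support of the fan; it is isomorphic to `H⁰(X_ét, G_m)/k^*`. -/
def unitsGroup (Δ : Fan r) : AddSubgroup (Fin r → ℤ) where
  carrier := { m | ∀ x ∈ Δ.support, pair m x = 0 }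
  zero_mem' := fun x _ => pair_zero x
  add_mem' := by
    intro a b ha hb
    intro x hx
    rw [pair_add, ha x hx, hb x hx, add_zero]
  neg_mem' := by
    intro a ha x hx
    rw [pair_neg, ha x hx, neg_zero]

end Units

section ClassGroup

/-- The "divisor" homomorphism `M → ℤ^{Δ(1)}`, `m ↦ (⟨m, η_ρ⟩)_ρ`, where `η ρ` is the
primitive lattice point on the ray `ρ`.  The class group `Cl X` of the toric variety is
the cokernel of this map. -/
noncomputable def divisorMap (Δ : Fan r) (η : Set (Fin r → ℝ) → (Fin r → ℤ)) :
    (Fin r → ℤ) →+ (↥Δ.rays → ℤ) :=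
  AddMonoidHom.mk' (fun m => fun ρ => ∑ i, m i * η ↑ρ i) (by
    intro a b
    funext ρ
    simp [add_mul, Finset.sum_add_distrib])

/-- The combinatorial presentation of the class group of Weil divisors:
`Cl X ≅ ℤ^{Δ(1)} / M`. -/
noncomputable def clQuot (Δ : Fan r) (η : Set (Fin r → ℝ) → (Fin r → ℤ)) : Type :=
  (↥Δ.rays → ℤ) ⧸ (divisorMap Δ η).range

noncomputable instance (Δ : Fan r) (η : Set (Fin r → ℝ) → (Fin r → ℤ)) :
    AddCommGroup (clQuot Δ η) :=
  inferInstanceAs (AddCommGroup ((↥Δ.rays → ℤ) ⧸ (divisorMap Δ η).range))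

/-- The divisor map on the fan of faces of a single cone `σ`. -/
noncomputable def divisorMapOn {r : ℕ} (σ : Set (Fin r → ℝ))
    (η : Set (Fin r → ℝ) → (Fin r → ℤ)) : (Fin r → ℤ) →+ (↥(raysOf σ) → ℤ) :=
  AddMonoidHom.mk' (fun m => fun ρ => ∑ i, m i * η ↑ρ i) (by
    intro a b
    funext ρ
    simp [add_mul, Finset.sum_add_distrib])

/-- The combinatorial presentation of the class group of the affine toric variety `U_σ`:
`Cl U_σ ≅ ℤ^{Δ(σ)(1)} / M`. -/
noncomputable def clQuotOn {r : ℕ} (σ : Set (Fin r → ℝ))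
    (η : Set (Fin r → ℝ) → (Fin r → ℤ)) : Type :=
  (↥(raysOf σ) → ℤ) ⧸ (divisorMapOn σ η).range

noncomputable instance {r : ℕ} (σ : Set (Fin r → ℝ)) (η : Set (Fin r → ℝ) → (Fin r → ℤ)) :
    AddCommGroup (clQuotOn σ η) :=
  inferInstanceAs (AddCommGroup ((↥(raysOf σ) → ℤ) ⧸ (divisorMapOn σ η).range))

end ClassGroup

section SupportFunctions

/-- Support functions on the subfan of faces of a single cone `c`: real valued functions,
vanishing outside `c`, linear on `c`, and integral on the lattice points of `c`. -/
def sfOn {r : ℕ} (c : Set (Fin r → ℝ)) : Set ((Fin r → ℝ) → ℝ) :=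
  { h | (∃ m : (Fin r → ℝ) →ₗ[ℝ] ℝ, ∀ x ∈ c, h x = m x) ∧
        (∀ v : Fin r → ℤ, realize v ∈ c → ∃ n : ℤ, h (realize v) = n) ∧
        (∀ x, x ∉ c → h x = 0) }

lemma sfOn_zero {r : ℕ} (c : Set (Fin r → ℝ)) : (0 : (Fin r → ℝ) → ℝ) ∈ sfOn c :=
  ⟨⟨0, fun x _ => by simp⟩, fun v _ => ⟨0, by simp⟩, fun x _ => rfl⟩

lemma sfOn_add {r : ℕ} {c : Set (Fin r → ℝ)} {a b : (Fin r → ℝ) → ℝ}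
    (ha : a ∈ sfOn c) (hb : b ∈ sfOn c) : a + b ∈ sfOn c := by
  obtain ⟨⟨m1, hm1⟩, ha2, ha3⟩ := ha
  obtain ⟨⟨m2, hm2⟩, hb2, hb3⟩ := hb
  refine ⟨⟨m1 + m2, fun x hx => by simp [hm1 x hx, hm2 x hx]⟩, fun v hv => ?_, fun x hx => ?_⟩
  · obtain ⟨n1, hn1⟩ := ha2 v hv
    obtain ⟨n2, hn2⟩ := hb2 v hv
    exact ⟨n1 + n2, by simp [hn1, hn2]⟩
  · simp [ha3 x hx, hb3 x hx]

lemma sfOn_neg {r : ℕ} {c : Set (Fin r → ℝ)} {a : (Fin r → ℝ) → ℝ}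
    (ha : a ∈ sfOn c) : -a ∈ sfOn c := by
  obtain ⟨⟨m, hm⟩, ha2, ha3⟩ := ha
  refine ⟨⟨-m, fun x hx => by simp [hm x hx]⟩, fun v hv => ?_, fun x hx => ?_⟩
  · obtain ⟨n, hn⟩ := ha2 v hv
    exact ⟨-n, by simp [hn]⟩
  · simp [ha3 x hx]

/-- The group `SF(Δ)` of `Δ`-linear support functions: real valued functions, vanishing
outside the support, linear on each cone, integral on the lattice points of the support. -/
def Fan.sf (Δ : Fan r) : AddSubgroup ((Fin r → ℝ) → ℝ) where
  carrier := { h |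
    (∀ σ ∈ Δ.cones, ∃ m : (Fin r → ℝ) →ₗ[ℝ] ℝ, ∀ x ∈ σ, h x = m x) ∧
    (∀ v : Fin r → ℤ, realize v ∈ Δ.support → ∃ n : ℤ, h (realize v) = n) ∧
    (∀ x, x ∉ Δ.support → h x = 0) }
  zero_mem' :=
    ⟨fun σ _ => ⟨0, fun x _ => by simp⟩, fun v _ => ⟨0, by simp⟩, fun x _ => rfl⟩
  add_mem' := by
    rintro a b ⟨ha1, ha2, ha3⟩ ⟨hb1, hb2, hb3⟩
    refine ⟨fun σ hσ => ?_, fun v hv => ?_, fun x hx => ?_⟩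
    · obtain ⟨m1, hm1⟩ := ha1 σ hσ
      obtain ⟨m2, hm2⟩ := hb1 σ hσ
      exact ⟨m1 + m2, fun x hx => by simp [hm1 x hx, hm2 x hx]⟩
    · obtain ⟨n1, hn1⟩ := ha2 v hv
      obtain ⟨n2, hn2⟩ := hb2 v hv
      exact ⟨n1 + n2, by simp [hn1, hn2]⟩
    · simp [ha3 x hx, hb3 x hx]
  neg_mem' := by
    rintro a ⟨ha1, ha2, ha3⟩
    refine ⟨fun σ hσ => ?_, fun v hv => ?_, fun x hx => ?_⟩
    · obtain ⟨m, hm⟩ := ha1 σ hσ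
      exact ⟨-m, fun x hx => by simp [hm x hx]⟩
    · obtain ⟨n, hn⟩ := ha2 v hv
      exact ⟨-n, by simp [hn]⟩
    · simp [ha3 x hx]

/-- The subgroup of `SF(Δ)` of (integral) linear support functions, i.e. the image of
`M = Hom(N, ℤ)` in `SF(Δ)`. -/
def Fan.linsf (Δ : Fan r) : AddSubgroup ((Fin r → ℝ) → ℝ) where
  carrier := { h | ∃ m : Fin r → ℤ,
    (∀ x ∈ Δ.support, h x = pair m x) ∧ (∀ x, x ∉ Δ.support → h x = 0) }
  zero_mem' := ⟨0, fun x _ => (pair_zero x).symm, fun _ _ => rfl⟩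
  add_mem' := by
    rintro a b ⟨m1, hm1, ha⟩ ⟨m2, hm2, hb⟩
    refine ⟨m1 + m2, fun x hx => ?_, fun x hx => ?_⟩
    · simp [hm1 x hx, hm2 x hx, pair_add]
    · simp [ha x hx, hb x hx]
  neg_mem' := by
    rintro a ⟨m, hm, ha⟩
    refine ⟨-m, fun x hx => ?_, fun x hx => ?_⟩
    · simp [hm x hx, pair_neg]
    · simp [ha x hx]

/-- The combinatorial presentation of the Picard group: `Pic X ≅ SF(Δ)/M`. -/
noncomputable def Fan.picQuot (Δ : Fan r) : Type :=
  ↥Δ.sf ⧸ (Δ.linsf.addSubgroupOf Δ.sf)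

noncomputable instance (Δ : Fan r) : AddCommGroup Δ.picQuot :=
  inferInstanceAs (AddCommGroup (↥Δ.sf ⧸ (Δ.linsf.addSubgroupOf Δ.sf)))

end SupportFunctions

end ToricFan


namespace ToricFan

open Module Submodule

variable {r : ℕ}

lemma realize_mem_coneOf {S : Finset (Fin r → ℤ)} {v : Fin r → ℤ} (hv : v ∈ S) :
    realize v ∈ coneOf S := by
  classical
  refine ⟨fun w => if w = v then 1 else 0, fun w => by dsimp only; split <;> norm_num, ?_⟩
  have h : ∀ w ∈ S, (if w = v then (1:ℝ) else 0) • realize w = if w = v then realize w else 0 := by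
    intro w _; split <;> simp
  rw [Finset.sum_congr rfl h, Finset.sum_ite_eq' S v realize, if_pos hv]

lemma zero_mem_coneOf (S : Finset (Fin r → ℤ)) : (0 : Fin r → ℝ) ∈ coneOf S :=
  ⟨0, fun _ => le_refl 0, by simp⟩

lemma coneOf_smul_mem {S : Finset (Fin r → ℤ)} {x : Fin r → ℝ} {a : ℝ} (ha : 0 ≤ a)
    (hx : x ∈ coneOf S) : a • x ∈ coneOf S := by
  obtain ⟨c, hc, rfl⟩ := hx
  refine ⟨fun v => a * c v, fun v => mul_nonneg ha (hc v), ?_⟩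
  rw [Finset.smul_sum]
  exact Finset.sum_congr rfl fun v _ => (smul_smul a (c v) (realize v))

lemma coneOf_add_mem {S : Finset (Fin r → ℤ)} {x y : Fin r → ℝ}
    (hx : x ∈ coneOf S) (hy : y ∈ coneOf S) : x + y ∈ coneOf S := by
  obtain ⟨c, hc, rfl⟩ := hx
  obtain ⟨c', hc', rfl⟩ := hy
  refine ⟨fun v => c v + c' v, fun v => add_nonneg (hc v) (hc' v), ?_⟩
  rw [← Finset.sum_add_distrib]
  exact Finset.sum_congr rfl fun v _ => (add_smul (c v) (c' v) (realize v)).symm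

lemma map_coneOf (m : (Fin r → ℝ) →ₗ[ℝ] ℝ) (S : Finset (Fin r → ℤ)) (c : (Fin r → ℤ) → ℝ) :
    m (∑ v ∈ S, c v • realize v) = ∑ v ∈ S, c v * m (realize v) := by
  rw [map_sum]
  exact Finset.sum_congr rfl fun v _ => by rw [map_smul, smul_eq_mul]

lemma nonneg_on_coneOf {m : (Fin r → ℝ) →ₗ[ℝ] ℝ} {S : Finset (Fin r → ℤ)}
    (h : ∀ v ∈ S, 0 ≤ m (realize v)) : ∀ x ∈ coneOf S, 0 ≤ m x := by
  rintro x ⟨c, hc, rfl⟩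
  rw [map_coneOf]
  exact Finset.sum_nonneg fun v hv => mul_nonneg (hc v) (h v hv)

open scoped Classical in
lemma face_eq_coneOf_filter (m : (Fin r → ℝ) →ₗ[ℝ] ℝ) (S : Finset (Fin r → ℤ))
    (h : ∀ v ∈ S, 0 ≤ m (realize v)) :
    {x | x ∈ coneOf S ∧ m x = 0} = coneOf (S.filter fun v => m (realize v) = 0) := by
  ext x
  constructor
  · rintro ⟨⟨c, hc, rfl⟩, hm0⟩
    rw [map_coneOf] at hm0
    have hz : ∀ v ∈ S, c v * m (realize v) = 0 :=
      (Finset.sum_eq_zero_iff_of_nonneg fun v hv => mul_nonneg (hc v) (h v hv)).1 hm0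
    refine ⟨fun v => if m (realize v) = 0 then c v else 0,
      fun v => by dsimp only; split; exacts [hc v, le_refl 0], ?_⟩
    rw [Finset.sum_filter]
    refine Finset.sum_congr rfl fun v hv => ?_
    by_cases h0 : m (realize v) = 0
    · simp [h0]
    · have hc0 : c v = 0 := by
        rcases mul_eq_zero.1 (hz v hv) with h' | h'
        · exact h'
        · exact absurd h' h0
      simp [h0, hc0]
  · rintro ⟨c, hc, rfl⟩
    constructor
    · refine ⟨fun v => if m (realize v) = 0 then c v else 0,
        fun v => by dsimp only; split; exacts [hc v, le_refl 0], ?_⟩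
      rw [Finset.sum_filter]
      refine Finset.sum_congr rfl fun v hv => ?_
      by_cases h0 : m (realize v) = 0 <;> simp [h0]
    · rw [map_coneOf]
      exact Finset.sum_eq_zero fun v hv => by
        rw [(Finset.mem_filter.1 hv).2, mul_zero]

open scoped Classical in
lemma isFaceOf_coneOf_filter (m : (Fin r → ℝ) →ₗ[ℝ] ℝ) (S : Finset (Fin r → ℤ))
    (h : ∀ v ∈ S, 0 ≤ m (realize v)) :
    IsFaceOf (coneOf (S.filter fun v => m (realize v) = 0)) (coneOf S) :=
  ⟨m, nonneg_on_coneOf h, (face_eq_coneOf_filter m S h).symm⟩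

lemma IsFaceOf.subset {τ σ : Set (Fin r → ℝ)} (h : IsFaceOf τ σ) : τ ⊆ σ := by
  obtain ⟨m, _, rfl⟩ := h
  exact fun x hx => hx.1

lemma isFaceOf_refl (σ : Set (Fin r → ℝ)) : IsFaceOf σ σ :=
  ⟨0, fun x _ => le_refl 0, by ext x; simp⟩

lemma IsFaceOf.rational {τ σ : Set (Fin r → ℝ)} (hσ : IsRationalCone σ) (h : IsFaceOf τ σ) :
    IsRationalCone τ := by
  classical
  obtain ⟨S, rfl⟩ := hσ
  obtain ⟨m, hm, rfl⟩ := h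
  exact ⟨S.filter fun v => m (realize v) = 0,
    face_eq_coneOf_filter m S fun v hv => hm _ (realize_mem_coneOf hv)⟩

lemma IsFaceOf.trans_of_rational {τ σ ρ : Set (Fin r → ℝ)} (hρ : IsRationalCone ρ)
    (h1 : IsFaceOf τ σ) (h2 : IsFaceOf σ ρ) : IsFaceOf τ ρ := by
  classical
  obtain ⟨S, rfl⟩ := hρ
  obtain ⟨n, hn, hσ⟩ := h2
  obtain ⟨m, hm, hτ⟩ := h1
  subst hσ; subst hτ
  set C : ℝ := 1 + ∑ v ∈ S, max 0 (-(m (realize v)) / n (realize v)) with hC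
  have hCsum : ∀ v ∈ S, max 0 (-(m (realize v)) / n (realize v)) ≤ C - 1 := by
    intro v hv
    have : C - 1 = ∑ v ∈ S, max 0 (-(m (realize v)) / n (realize v)) := by rw [hC]; ring
    rw [this]
    exact Finset.single_le_sum (f := fun w => max 0 (-(m (realize w)) / n (realize w)))
      (fun w _ => le_max_left 0 _) hv
  have hkey : ∀ v ∈ S, 0 ≤ (m + C • n) (realize v) ∧
      ((m + C • n) (realize v) = 0 → n (realize v) = 0 ∧ m (realize v) = 0) := by
    intro v hv
    have happ : (m + C • n) (realize v) = m (realize v) + C * n (realize v) := by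
      simp [smul_eq_mul]
    have hnv : 0 ≤ n (realize v) := hn _ (realize_mem_coneOf hv)
    rcases hnv.eq_or_lt with h0 | hpos
    · have hmv : 0 ≤ m (realize v) := hm _ ⟨realize_mem_coneOf hv, h0.symm⟩
      constructor
      · rw [happ, ← h0, mul_zero, add_zero]; exact hmv
      · intro hz
        rw [happ, ← h0, mul_zero, add_zero] at hz
        exact ⟨h0.symm, hz⟩
    · have hCgt : -(m (realize v)) / n (realize v) < C := by
        have := hCsum v hv
        have h1 : -(m (realize v)) / n (realize v) ≤ C - 1 :=
          le_trans (le_max_right 0 _) this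
        linarith
      have : -(m (realize v)) < C * n (realize v) := by
        rw [div_lt_iff₀ hpos] at hCgt
        linarith [hCgt]
      constructor
      · rw [happ]; linarith
      · intro hz; rw [happ] at hz; linarith
  refine ⟨m + C • n, nonneg_on_coneOf fun v hv => (hkey v hv).1, ?_⟩
  ext x
  constructor
  · rintro ⟨⟨hxρ, hnx⟩, hmx⟩
    refine ⟨hxρ, ?_⟩
    simp [smul_eq_mul, hnx, hmx]
  · rintro ⟨hxρ, hpx⟩
    have hx' : x ∈ coneOf (S.filter fun v => (m + C • n) (realize v) = 0) := by
      rw [← face_eq_coneOf_filter (m + C • n) S fun v hv => (hkey v hv).1]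
      exact ⟨hxρ, hpx⟩
    obtain ⟨c, hc, rfl⟩ := hx'
    have hgen : ∀ v ∈ S.filter (fun v => (m + C • n) (realize v) = 0),
        n (realize v) = 0 ∧ m (realize v) = 0 := by
      intro v hv
      obtain ⟨hvS, hv0⟩ := Finset.mem_filter.1 hv
      exact (hkey v hvS).2 hv0
    have hnx : n (∑ v ∈ S.filter (fun v => (m + C • n) (realize v) = 0), c v • realize v) = 0 := by
      rw [map_coneOf]
      exact Finset.sum_eq_zero fun v hv => by rw [(hgen v hv).1, mul_zero]
    have hmx : m (∑ v ∈ S.filter (fun v => (m + C • n) (realize v) = 0), c v • realize v) = 0 := by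
      rw [map_coneOf]
      exact Finset.sum_eq_zero fun v hv => by rw [(hgen v hv).2, mul_zero]
    exact ⟨⟨hxρ, hnx⟩, hmx⟩

lemma span_coneOf (S : Finset (Fin r → ℤ)) :
    span ℝ (coneOf S) = span ℝ (realize '' (S : Set (Fin r → ℤ))) := by
  apply le_antisymm
  · rw [Submodule.span_le]
    rintro x ⟨c, hc, rfl⟩
    exact Submodule.sum_mem _ fun v hv => Submodule.smul_mem _ _
      (Submodule.subset_span ⟨v, hv, rfl⟩)
  · apply Submodule.span_mono
    rintro x ⟨v, hv, rfl⟩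
    exact realize_mem_coneOf hv

lemma dimCone_coneOf (S : Finset (Fin r → ℤ)) :
    dimCone (coneOf S) = finrank ℝ (span ℝ (realize '' (S : Set (Fin r → ℤ)))) := by
  unfold dimCone
  rw [span_coneOf]

lemma vanish_on_span_coneOf {S : Finset (Fin r → ℤ)} {φ : (Fin r → ℝ) →ₗ[ℝ] ℝ}
    (h : ∀ v ∈ S, φ (realize v) = 0) : ∀ x ∈ span ℝ (coneOf S), φ x = 0 := by
  have hle : span ℝ (coneOf S) ≤ LinearMap.ker φ := by
    rw [Submodule.span_le]
    rintro y ⟨c, hc, rfl⟩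
    rw [SetLike.mem_coe, LinearMap.mem_ker, map_coneOf]
    exact Finset.sum_eq_zero fun v hv => by rw [h v hv, mul_zero]
  exact fun x hx => LinearMap.mem_ker.1 (hle hx)

lemma dimCone_lt_of_ne {τ σ : Set (Fin r → ℝ)} (h : IsFaceOf τ σ) (hne : τ ≠ σ) :
    dimCone τ < dimCone σ := by
  obtain ⟨m, hm, rfl⟩ := h
  have hsub : {x | x ∈ σ ∧ m x = 0} ⊆ σ := fun x hx => hx.1
  have hlt : span ℝ {x | x ∈ σ ∧ m x = 0} < span ℝ σ := by
    refine lt_of_le_of_ne (Submodule.span_mono hsub) fun heq => hne ?_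
    have hker : span ℝ {x | x ∈ σ ∧ m x = 0} ≤ LinearMap.ker m := by
      rw [Submodule.span_le]
      intro x hx
      exact LinearMap.mem_ker.2 hx.2
    ext x
    refine ⟨fun hx => hx.1, fun hx => ⟨hx, ?_⟩⟩
    exact LinearMap.mem_ker.1 (hker (heq ▸ Submodule.subset_span hx))
  exact Submodule.finrank_lt_finrank_of_lt hlt

lemma IsStronglyConvex.mono {τ σ : Set (Fin r → ℝ)} (h : IsStronglyConvex σ) (hsub : τ ⊆ σ) :
    IsStronglyConvex τ := fun x hx hnx => h x (hsub hx) (hsub hnx)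

lemma dimCone_zero : dimCone ({0} : Set (Fin r → ℝ)) = 0 := by
  unfold dimCone
  rw [show ({0} : Set (Fin r → ℝ)) = {(0 : Fin r → ℝ)} from rfl]
  rw [Submodule.span_zero_singleton]
  exact finrank_bot ℝ _

lemma exists_zero_face {S : Finset (Fin r → ℤ)} (hsc : IsStronglyConvex (coneOf S)) :
    ∃ m : (Fin r → ℝ) →ₗ[ℝ] ℝ, (∀ x ∈ coneOf S, 0 ≤ m x) ∧
      {x | x ∈ coneOf S ∧ m x = 0} = ({0} : Set (Fin r → ℝ)) := by
  classical
  set F : Finset (Fin r → ℝ) := (S.image realize).erase 0 with hF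
  have h0 : (0 : Fin r → ℝ) ∉ convexHull ℝ (F : Set (Fin r → ℝ)) := by
    intro hmem
    rw [Finset.convexHull_eq] at hmem
    obtain ⟨w, hw0, hw1, hwc⟩ := hmem
    rw [Finset.centerMass_eq_of_sum_1 _ _ hw1] at hwc
    simp only [id_eq] at hwc
    have hne : ∃ y ∈ F, w y ≠ 0 := by
      by_contra hallz
      push_neg at hallz
      rw [Finset.sum_eq_zero hallz] at hw1
      exact zero_ne_one hw1
    obtain ⟨y₀, hy₀F, hy₀w⟩ := hne
    have hy₀pos : 0 < w y₀ := lt_of_le_of_ne (hw0 y₀ hy₀F) (Ne.symm hy₀w)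
    have hy₀cone : y₀ ∈ coneOf S := by
      obtain ⟨v, hv, rfl⟩ := Finset.mem_image.1 (Finset.mem_of_mem_erase hy₀F)
      exact realize_mem_coneOf hv
    have hrest : (∑ y ∈ F.erase y₀, w y • y) ∈ coneOf S := by
      refine Finset.sum_induction _ (fun z => z ∈ coneOf S)
        (fun a b ha hb => coneOf_add_mem ha hb) (zero_mem_coneOf S) ?_
      intro y hy
      have hyF : y ∈ F := Finset.mem_of_mem_erase hy
      obtain ⟨v, hv, rfl⟩ := Finset.mem_image.1 (Finset.mem_of_mem_erase hyF)
      exact coneOf_smul_mem (hw0 _ hyF) (realize_mem_coneOf hv)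
    have hsum : w y₀ • y₀ + ∑ y ∈ F.erase y₀, w y • y = 0 := by
      rw [Finset.add_sum_erase F (fun y => w y • y) hy₀F]
      exact hwc
    have hneg : -y₀ ∈ coneOf S := by
      have : -y₀ = (w y₀)⁻¹ • (∑ y ∈ F.erase y₀, w y • y) := by
        have h1 : (∑ y ∈ F.erase y₀, w y • y) = -(w y₀ • y₀) := by
          linear_combination (norm := module) hsum
        rw [h1, smul_neg, smul_smul, inv_mul_cancel₀ (ne_of_gt hy₀pos), one_smul]
      rw [this]
      exact coneOf_smul_mem (inv_nonneg.2 hy₀pos.le) hrest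
    have : y₀ = 0 := hsc y₀ hy₀cone hneg
    exact (Finset.ne_of_mem_erase hy₀F) this
  obtain ⟨f, u, hu0, hu⟩ := geometric_hahn_banach_point_closed
    (convex_convexHull ℝ (F : Set (Fin r → ℝ)))
    ((F.finite_toSet.isCompact_convexHull (𝕜 := ℝ)).isClosed) h0
  have hf0 : f 0 = 0 := map_zero f
  have hupos : 0 < u := by rw [hf0] at hu0; exact hu0
  have hgen : ∀ v ∈ S, 0 ≤ f (realize v) ∧ (f (realize v) = 0 → realize v = 0) := by
    intro v hv
    by_cases hz : realize v = 0
    · rw [hz, hf0]; exact ⟨le_refl 0, fun _ => rfl⟩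
    · have hvF : realize v ∈ F :=
        Finset.mem_erase.2 ⟨hz, Finset.mem_image.2 ⟨v, hv, rfl⟩⟩
      have : u < f (realize v) := hu _ (subset_convexHull ℝ _ hvF)
      exact ⟨le_of_lt (lt_trans hupos this), fun he => absurd he (by linarith)⟩
  refine ⟨(f : (Fin r → ℝ) →ₗ[ℝ] ℝ), nonneg_on_coneOf fun v hv => (hgen v hv).1, ?_⟩
  apply Set.Subset.antisymm
  · rintro x hx
    classical
    have hx' : x ∈ coneOf (S.filter fun v =>
        ((f : (Fin r → ℝ) →ₗ[ℝ] ℝ)) (realize v) = 0) := by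
      rw [← face_eq_coneOf_filter _ S fun v hv => (hgen v hv).1]
      exact hx
    obtain ⟨c, hc, rfl⟩ := hx'
    have : ∀ v ∈ S.filter (fun v => ((f : (Fin r → ℝ) →ₗ[ℝ] ℝ)) (realize v) = 0),
        c v • realize v = 0 := by
      intro v hv
      obtain ⟨hvS, hv0⟩ := Finset.mem_filter.1 hv
      rw [(hgen v hvS).2 hv0, smul_zero]
    rw [Finset.sum_eq_zero this]
    exact Set.mem_singleton _
  · rintro x hx
    rw [Set.mem_singleton_iff] at hx
    subst hx
    exact ⟨zero_mem_coneOf S, map_zero _⟩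

open scoped Classical in
lemma exists_bigger_face {S : Finset (Fin r → ℤ)} {τ : Set (Fin r → ℝ)}
    (hface : IsFaceOf τ (coneOf S)) (hne : τ ≠ coneOf S)
    (hdim : dimCone τ + 2 ≤ dimCone (coneOf S)) :
    ∃ τ' : Set (Fin r → ℝ), IsFaceOf τ' (coneOf S) ∧ τ' ≠ coneOf S ∧
      dimCone τ < dimCone τ' := by
  obtain ⟨m, hm, hτ⟩ := hface
  set U : Submodule ℝ (Fin r → ℝ) := span ℝ τ with hU
  set W : Submodule ℝ (Fin r → ℝ) := span ℝ (coneOf S) with hW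
  set Bad : Submodule ℝ ((Fin r → ℝ) →ₗ[ℝ] ℝ) :=
    span ℝ {m} ⊔ W.dualAnnihilator with hBad
  -- dimension counts
  have hdual : ∀ V' : Submodule ℝ (Fin r → ℝ),
      finrank ℝ V'.dualAnnihilator + finrank ℝ V' = r := by
    intro V'
    have h1 : finrank ℝ V'.dualAnnihilator = finrank ℝ ((Fin r → ℝ) ⧸ V') :=
      ((Subspace.quotEquivAnnihilator V').finrank_eq).symm
    rw [h1, Submodule.finrank_quotient_add_finrank, Module.finrank_fin_fun]
  have h2 : finrank ℝ (span ℝ ({m} : Set ((Fin r → ℝ) →ₗ[ℝ] ℝ))) ≤ 1 := by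
    rcases eq_or_ne m 0 with rfl | hm0
    · rw [Submodule.span_zero_singleton]
      simp
    · exact le_of_eq (finrank_span_singleton hm0)
  have hBadle : finrank ℝ Bad ≤ 1 + finrank ℝ W.dualAnnihilator := by
    have h1 : finrank ℝ ↥(span ℝ ({m} : Set ((Fin r → ℝ) →ₗ[ℝ] ℝ)) ⊔ W.dualAnnihilator)
        + finrank ℝ ↥(span ℝ ({m} : Set ((Fin r → ℝ) →ₗ[ℝ] ℝ)) ⊓ W.dualAnnihilator)
        = finrank ℝ ↥(span ℝ ({m} : Set ((Fin r → ℝ) →ₗ[ℝ] ℝ)))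
        + finrank ℝ ↥W.dualAnnihilator :=
      Submodule.finrank_sup_add_finrank_inf_eq _ _
    have h3 : finrank ℝ ↥Bad
        = finrank ℝ ↥(span ℝ ({m} : Set ((Fin r → ℝ) →ₗ[ℝ] ℝ)) ⊔ W.dualAnnihilator) := rfl
    omega
  have hnotle : ¬ (U.dualAnnihilator ≤ Bad) := by
    intro hle
    have h1' : finrank ℝ U.dualAnnihilator ≤ finrank ℝ Bad := Submodule.finrank_mono hle
    have h2' := hdual U
    have h3' := hdual W
    have h4' : finrank ℝ U = dimCone τ := rfl
    have h5' : finrank ℝ W = dimCone (coneOf S) := rfl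
    omega
  obtain ⟨g₀, hg₀U, hg₀Bad⟩ := SetLike.not_le_iff_exists.1 hnotle
  have hmBad : m ∈ Bad :=
    Submodule.mem_sup_left (Submodule.subset_span (Set.mem_singleton m))
  -- properness of the given face
  have hproper : ∃ v ∈ S, 0 < m (realize v) := by
    by_contra h'
    push_neg at h'
    have hz : ∀ v ∈ S, m (realize v) = 0 := fun v hv =>
      le_antisymm (h' v hv) (hm _ (realize_mem_coneOf hv))
    apply hne
    rw [hτ]
    ext x
    refine ⟨fun hx => hx.1, fun hx => ⟨hx, ?_⟩⟩
    obtain ⟨c, hc, rfl⟩ := hx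
    rw [map_coneOf]
    exact Finset.sum_eq_zero fun v hv => by rw [hz v hv, mul_zero]
  have hT0 : ∀ v ∈ S, m (realize v) = 0 → realize v ∈ τ := by
    intro v hv h0
    rw [hτ]
    exact ⟨realize_mem_coneOf hv, h0⟩
  -- find g with a strictly negative value on some positive generator
  have hgood : ∃ g : (Fin r → ℝ) →ₗ[ℝ] ℝ, g ∈ U.dualAnnihilator ∧ g ∉ Bad ∧
      ∃ v ∈ S, 0 < m (realize v) ∧ g (realize v) < 0 := by
    have hex : ∃ v ∈ S, 0 < m (realize v) ∧ g₀ (realize v) ≠ 0 := by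
      by_contra h'
      push_neg at h'
      have hzero : ∀ v ∈ S, g₀ (realize v) = 0 := by
        intro v hv
        have hmv : 0 ≤ m (realize v) := hm _ (realize_mem_coneOf hv)
        rcases hmv.eq_or_lt with h0 | hpos
        · exact (Submodule.mem_dualAnnihilator _).1 hg₀U _
            (Submodule.subset_span (hT0 v hv h0.symm))
        · exact h' v hv hpos
      have : g₀ ∈ W.dualAnnihilator := by
        rw [Submodule.mem_dualAnnihilator]
        exact fun w hw => vanish_on_span_coneOf hzero w hw
      exact hg₀Bad (Submodule.mem_sup_right this)
    obtain ⟨v₁, hv₁S, hv₁m, hv₁g⟩ := hex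
    rcases lt_or_gt_of_ne hv₁g with hneg | hpos
    · exact ⟨g₀, hg₀U, hg₀Bad, v₁, hv₁S, hv₁m, hneg⟩
    · refine ⟨-g₀, Submodule.neg_mem _ hg₀U, fun h => hg₀Bad ?_, v₁, hv₁S, hv₁m, by
        simpa using hpos⟩
      simpa using Submodule.neg_mem _ h
  obtain ⟨g, hgU, hgBad, v₁, hv₁S, hv₁m, hv₁g⟩ := hgood
  have hgτ : ∀ x ∈ τ, g x = 0 := fun x hx =>
    (Submodule.mem_dualAnnihilator _).1 hgU x (Submodule.subset_span hx)
  set A : Finset (Fin r → ℤ) :=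
    S.filter (fun v => 0 < m (realize v) ∧ g (realize v) < 0) with hA
  have hAne : A.Nonempty := ⟨v₁, Finset.mem_filter.2 ⟨hv₁S, hv₁m, hv₁g⟩⟩
  obtain ⟨v₀, hv₀A, hv₀min⟩ :=
    Finset.exists_min_image A (fun v => m (realize v) / (-(g (realize v)))) hAne
  obtain ⟨hv₀S, hv₀m, hv₀g⟩ : v₀ ∈ S ∧ 0 < m (realize v₀) ∧ g (realize v₀) < 0 := by
    have := Finset.mem_filter.1 hv₀A
    exact ⟨this.1, this.2.1, this.2.2⟩
  set t : ℝ := m (realize v₀) / (-(g (realize v₀))) with ht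
  have htpos : 0 < t := div_pos hv₀m (neg_pos.2 hv₀g)
  set m' : (Fin r → ℝ) →ₗ[ℝ] ℝ := m + t • g with hm'
  have happ : ∀ x, m' x = m x + t * g x := fun x => by simp [hm', smul_eq_mul]
  have hm'nonneg : ∀ v ∈ S, 0 ≤ m' (realize v) := by
    intro v hv
    have hmv : 0 ≤ m (realize v) := hm _ (realize_mem_coneOf hv)
    rw [happ]
    rcases hmv.eq_or_lt with h0 | hpos
    · rw [hgτ _ (hT0 v hv h0.symm), ← h0, mul_zero, add_zero]
    · rcases le_or_gt 0 (g (realize v)) with hg | hg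
      · exact add_nonneg hpos.le (mul_nonneg htpos.le hg)
      · have hvA : v ∈ A := Finset.mem_filter.2 ⟨hv, hpos, hg⟩
        have h1 : t ≤ m (realize v) / (-(g (realize v))) := hv₀min v hvA
        have h2 : t * (-(g (realize v))) ≤ m (realize v) := by
          rw [← le_div_iff₀ (neg_pos.2 hg)]
          exact h1
        have h3 : t * g (realize v) = -(t * (-(g (realize v)))) := by ring
        linarith only [h2, h3]
  have hm'v₀ : m' (realize v₀) = 0 := by
    have hne0 : g (realize v₀) ≠ 0 := ne_of_lt hv₀g
    rw [happ, ht, div_neg, neg_mul, div_mul_cancel₀ _ hne0, add_neg_cancel]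
  have hm'proper : ∃ v ∈ S, 0 < m' (realize v) := by
    by_contra h'
    push_neg at h'
    have hz : ∀ v ∈ S, m' (realize v) = 0 := fun v hv =>
      le_antisymm (h' v hv) (hm'nonneg v hv)
    have hm'W : m' ∈ W.dualAnnihilator := by
      rw [Submodule.mem_dualAnnihilator]
      exact fun w hw => vanish_on_span_coneOf hz w hw
    have hm'Bad : m' ∈ Bad := Submodule.mem_sup_right hm'W
    apply hgBad
    have hgeq : g = t⁻¹ • (m' - m) := by
      rw [hm']
      rw [add_sub_cancel_left, smul_smul, inv_mul_cancel₀ htpos.ne', one_smul]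
    rw [hgeq]
    exact Submodule.smul_mem _ _ (Submodule.sub_mem _ hm'Bad hmBad)
  refine ⟨{x | x ∈ coneOf S ∧ m' x = 0}, ⟨m', nonneg_on_coneOf hm'nonneg, rfl⟩, ?_, ?_⟩
  · obtain ⟨v₂, hv₂S, hv₂⟩ := hm'proper
    intro heq
    have : realize v₂ ∈ {x | x ∈ coneOf S ∧ m' x = 0} := by
      rw [heq]; exact realize_mem_coneOf hv₂S
    exact absurd this.2 (ne_of_gt hv₂)
  · have hsub : τ ⊆ {x | x ∈ coneOf S ∧ m' x = 0} := by
      intro x hx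
      have hx' := hτ ▸ hx
      refine ⟨hx'.1, ?_⟩
      rw [happ, hx'.2, hgτ x hx, mul_zero, add_zero]
    have hv₀mem : realize v₀ ∈ {x | x ∈ coneOf S ∧ m' x = 0} :=
      ⟨realize_mem_coneOf hv₀S, hm'v₀⟩
    have hv₀notU : realize v₀ ∉ U := by
      intro hmem
      have : g (realize v₀) = 0 := (Submodule.mem_dualAnnihilator _).1 hgU _ hmem
      exact absurd this (ne_of_lt hv₀g)
    have hlt : span ℝ τ < span ℝ {x | x ∈ coneOf S ∧ m' x = 0} := by
      rw [SetLike.lt_iff_le_and_exists]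
      exact ⟨Submodule.span_mono hsub, realize v₀,
        Submodule.subset_span hv₀mem, hv₀notU⟩
    exact Submodule.finrank_lt_finrank_of_lt hlt

lemma exists_facet {σ : Set (Fin r → ℝ)} (hrat : IsRationalCone σ)
    (hsc : IsStronglyConvex σ) (hd : 1 ≤ dimCone σ) :
    ∃ τ, IsFaceOf τ σ ∧ IsRationalCone τ ∧ IsStronglyConvex τ ∧
      dimCone τ + 1 = dimCone σ := by
  classical
  obtain ⟨S, rfl⟩ := hrat
  set d := dimCone (coneOf S) with hd'
  set P : ℕ → Prop := fun k => ∃ τ, IsFaceOf τ (coneOf S) ∧ τ ≠ coneOf S ∧ dimCone τ = k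
    with hP
  have hP0 : P 0 := by
    obtain ⟨m, hm1, hm2⟩ := exists_zero_face hsc
    refine ⟨{0}, ⟨m, hm1, hm2.symm⟩, fun h => ?_, dimCone_zero⟩
    rw [← h, dimCone_zero] at hd'
    omega
  have hPk : P (Nat.findGreatest P (d - 1)) := Nat.findGreatest_spec (Nat.zero_le _) hP0
  have hkle : Nat.findGreatest P (d - 1) ≤ d - 1 := Nat.findGreatest_le _
  have hallle : ∀ k, P k → k ≤ d - 1 := by
    rintro k ⟨τ, hface, hne, hdim⟩
    have := dimCone_lt_of_ne hface hne
    omega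
  have hkeq : Nat.findGreatest P (d - 1) = d - 1 := by
    by_contra hne'
    have hklt : Nat.findGreatest P (d - 1) + 2 ≤ d := by omega
    obtain ⟨τ, hface, hne, hdim⟩ := hPk
    obtain ⟨τ', hface', hne', hdim'⟩ := exists_bigger_face hface hne (by omega)
    have hP' : P (dimCone τ') := ⟨τ', hface', hne', rfl⟩
    exact Nat.findGreatest_is_greatest (by omega) (hallle _ hP') hP'
  obtain ⟨τ, hface, hne, hdim⟩ := hPk
  exact ⟨τ, hface, hface.rational ⟨S, rfl⟩, hsc.mono hface.subset, by omega⟩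

lemma exists_chain : ∀ (d : ℕ) (σ : Set (Fin r → ℝ)), IsRationalCone σ →
    IsStronglyConvex σ → dimCone σ = d →
    ∃ f : ℕ → Set (Fin r → ℝ), f d = σ ∧ (∀ i ≤ d, dimCone (f i) = i) ∧
      (∀ i < d, IsFaceOf (f i) (f (i + 1)) ∧ f i ≠ f (i + 1)) := by
  intro d
  induction d with
  | zero =>
    intro σ _ _ hdim
    refine ⟨fun _ => σ, rfl, fun i hi => ?_, fun i hi => absurd hi (by omega)⟩
    have h0 : i = 0 := by omega
    subst h0
    exact hdim
  | succ d ih =>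
    intro σ hrat hsc hdim
    obtain ⟨τ, hface, hτrat, hτsc, hτd⟩ := exists_facet hrat hsc (by omega)
    obtain ⟨f, hfd, hdims, hsteps⟩ := ih τ hτrat hτsc (by omega)
    classical
    refine ⟨fun i => if i = d + 1 then σ else f i, by simp, ?_, ?_⟩
    · intro i hi
      dsimp only
      by_cases h : i = d + 1
      · rw [if_pos h, hdim]
        omega
      · have h1 : i ≤ d := by omega
        rw [if_neg h]
        exact hdims i h1
    · intro i hi
      dsimp only
      by_cases h : i = d
      · have h1 : i ≠ d + 1 := by omega
        have h2 : i + 1 = d + 1 := by omega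
        rw [if_neg h1, if_pos h2, h, hfd]
        refine ⟨hface, fun he => ?_⟩
        rw [he] at hτd
        omega
      · have h1 : i ≠ d + 1 := by omega
        have h2 : i + 1 ≠ d + 1 := by omega
        rw [if_neg h1, if_neg h2]
        exact hsteps i (by omega)

section Topology

lemma fan_isOpen_iff (Δ : Fan r) {U : Set ↥Δ.cones} :
    @IsOpen _ Δ.topology U ↔ ∀ σ ∈ U, ∀ τ : ↥Δ.cones,
      IsFaceOf (τ : Set (Fin r → ℝ)) (σ : Set (Fin r → ℝ)) → τ ∈ U := Iff.rfl

lemma fan_closure_singleton (Δ : Fan r) (σ : ↥Δ.cones) :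
    @closure _ Δ.topology {σ} =
      {ρ : ↥Δ.cones | IsFaceOf (σ : Set (Fin r → ℝ)) (ρ : Set (Fin r → ℝ))} := by
  letI := Δ.topology
  ext ρ
  rw [_root_.mem_closure_iff]
  constructor
  · intro h
    have hopen : IsOpen {π : ↥Δ.cones |
        IsFaceOf (π : Set (Fin r → ℝ)) (ρ : Set (Fin r → ℝ))} :=
      (fan_isOpen_iff Δ).2 fun π hπ κ hκ =>
        IsFaceOf.trans_of_rational (Δ.rational _ ρ.2) hκ hπ
    obtain ⟨x, hx1, hx2⟩ := h _ hopen (isFaceOf_refl _)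
    rw [Set.mem_singleton_iff] at hx2
    exact hx2 ▸ hx1
  · intro hface o ho hρo
    exact ⟨σ, (fan_isOpen_iff Δ).1 ho ρ hρo σ hface, rfl⟩

lemma fan_exists_generic (Δ : Fan r)
    (C : @TopologicalSpace.IrreducibleCloseds ↥Δ.cones Δ.topology) :
    ∃ x : ↥Δ.cones, (C : Set ↥Δ.cones) = @closure _ Δ.topology {x} := by
  letI := Δ.topology
  haveI : Finite ↥Δ.cones := Δ.finite.to_subtype
  classical
  have hC : IsIrreducible (C : Set ↥Δ.cones) := C.isIrreducible'
  have hfin : (C : Set ↥Δ.cones).Finite := Set.toFinite _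
  obtain ⟨z, hz, hsub⟩ := isIrreducible_iff_sUnion_isClosed.1 hC
    (hfin.toFinset.image fun x => closure {x})
    (by
      intro z hz
      simp only [Finset.mem_image] at hz
      obtain ⟨x, _, rfl⟩ := hz
      exact isClosed_closure)
    (by
      intro x hx
      refine Set.mem_sUnion.2 ⟨closure {x}, ?_, subset_closure rfl⟩
      simp only [Finset.coe_image, Set.mem_image, Finset.mem_coe]
      exact ⟨x, hfin.mem_toFinset.2 hx, rfl⟩)
  simp only [Finset.mem_image] at hz
  obtain ⟨x, hxC, rfl⟩ := hz
  rw [Set.Finite.mem_toFinset] at hxC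
  exact ⟨x, le_antisymm hsub
    (closure_minimal (Set.singleton_subset_iff.2 hxC) C.isClosed')⟩

/-- The closure of a point of `Δ_top`, as an irreducible closed subset. -/
noncomputable def ptCl (Δ : Fan r) (x : ↥Δ.cones) :
    @TopologicalSpace.IrreducibleCloseds ↥Δ.cones Δ.topology :=
  letI := Δ.topology
  ⟨closure {x}, isIrreducible_singleton.closure, isClosed_closure⟩

lemma ptCl_lt (Δ : Fan r) {a b : ↥Δ.cones}
    (hface : IsFaceOf (b : Set (Fin r → ℝ)) (a : Set (Fin r → ℝ)))
    (hne : (b : Set (Fin r → ℝ)) ≠ (a : Set (Fin r → ℝ))) :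
    ptCl Δ a < ptCl Δ b := by
  letI := Δ.topology
  have hsub : (ptCl Δ a : Set ↥Δ.cones) ⊆ (ptCl Δ b : Set ↥Δ.cones) := by
    show @closure _ Δ.topology {a} ⊆ @closure _ Δ.topology {b}
    rw [fan_closure_singleton, fan_closure_singleton]
    intro ρ hρ
    exact IsFaceOf.trans_of_rational (Δ.rational _ ρ.2) hface hρ
  have hmemb : b ∈ (ptCl Δ b : Set ↥Δ.cones) := subset_closure rfl
  have hnotmem : b ∉ (ptCl Δ a : Set ↥Δ.cones) := by
    show b ∉ @closure _ Δ.topology {a}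
    rw [fan_closure_singleton]
    intro hmem
    exact hne (Set.Subset.antisymm hface.subset (IsFaceOf.subset hmem))
  rw [SetLike.lt_iff_le_and_exists]
  exact ⟨hsub, b, hmemb, hnotmem⟩

lemma fan_krullDim_eq (Δ : Fan r) :
    @topologicalKrullDim ↥Δ.cones Δ.topology =
      ⨆ σ : ↥Δ.cones, ((dimCone (σ : Set (Fin r → ℝ)) : ℕ∞) : WithBot ℕ∞) := by
  letI := Δ.topology
  apply le_antisymm
  · refine iSup_le fun p => ?_
    choose x hx using fun i => fan_exists_generic Δ (p.toFun i)
    have hstep : ∀ i : Fin p.length,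
        dimCone ((x i.succ : ↥Δ.cones) : Set (Fin r → ℝ)) <
          dimCone ((x i.castSucc : ↥Δ.cones) : Set (Fin r → ℝ)) := by
      intro i
      have hlt := p.step i
      have hle : (p.toFun i.castSucc : Set ↥Δ.cones) ⊆ (p.toFun i.succ : Set ↥Δ.cones) :=
        SetLike.coe_subset_coe.2 (le_of_lt hlt)
      have hmem : x i.castSucc ∈ (p.toFun i.succ : Set ↥Δ.cones) :=
        hle (by rw [hx i.castSucc]; exact subset_closure rfl)
      rw [hx i.succ, fan_closure_singleton] at hmem
      have hne : ((x i.succ : ↥Δ.cones) : Set (Fin r → ℝ)) ≠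
          ((x i.castSucc : ↥Δ.cones) : Set (Fin r → ℝ)) := by
        intro he
        have h1 : x i.succ = x i.castSucc := Subtype.ext he
        have h2 : p.toFun i.castSucc = p.toFun i.succ := by
          apply SetLike.ext'
          rw [hx i.castSucc, hx i.succ, h1]
        exact (ne_of_lt hlt) h2
      exact dimCone_lt_of_ne hmem hne
    have hchain : ∀ k : ℕ, (hk : k ≤ p.length) →
        k ≤ dimCone ((x ⟨p.length - k, by omega⟩ : ↥Δ.cones) : Set (Fin r → ℝ)) := by
      intro k
      induction k with
      | zero => intro _; exact Nat.zero_le _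
      | succ k ihk =>
        intro hk
        have hklt : p.length - (k + 1) < p.length := by omega
        have hs := hstep ⟨p.length - (k + 1), hklt⟩
        have he1 : (⟨p.length - (k + 1), hklt⟩ : Fin p.length).castSucc
            = (⟨p.length - (k + 1), by omega⟩ : Fin (p.length + 1)) := rfl
        have he2 : (⟨p.length - (k + 1), hklt⟩ : Fin p.length).succ
            = (⟨p.length - k, by omega⟩ : Fin (p.length + 1)) := by
          apply Fin.ext
          simp only [Fin.val_succ]
          omega
        rw [he1, he2] at hs
        have hik := ihk (by omega)
        omega
    have hfinal := hchain p.length (le_refl _)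
    calc ((p.length : ℕ∞) : WithBot ℕ∞)
        ≤ ((dimCone ((x ⟨p.length - p.length, by omega⟩ : ↥Δ.cones) : Set (Fin r → ℝ)) : ℕ∞) :
            WithBot ℕ∞) := by exact_mod_cast hfinal
      _ ≤ _ := le_iSup (fun σ : ↥Δ.cones =>
            ((dimCone (σ : Set (Fin r → ℝ)) : ℕ∞) : WithBot ℕ∞)) _
  · refine iSup_le fun σ => ?_
    obtain ⟨f, hfd, hdims, hsteps⟩ := exists_chain (dimCone (σ : Set (Fin r → ℝ)))
      (σ : Set (Fin r → ℝ)) (Δ.rational _ σ.2) (Δ.stronglyConvex _ σ.2) rfl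
    set d := dimCone (σ : Set (Fin r → ℝ)) with hd
    have hmemaux : ∀ k, k ≤ d → f (d - k) ∈ Δ.cones := by
      intro k
      induction k with
      | zero => intro _; rw [Nat.sub_zero, hfd]; exact σ.2
      | succ k ihk =>
        intro hk
        have h1 : d - (k + 1) < d := by omega
        have h2 : d - (k + 1) + 1 = d - k := by omega
        have hs := (hsteps (d - (k + 1)) h1).1
        rw [h2] at hs
        exact Δ.face_mem _ (ihk (by omega)) _ hs
    have hmem : ∀ i : Fin (d + 1), f (d - (i : ℕ)) ∈ Δ.cones :=
      fun i => hmemaux (i : ℕ) (by omega)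
    have hstep2 : ∀ i : Fin d,
        ptCl Δ ⟨f (d - ((i.castSucc : Fin (d+1)) : ℕ)), hmem i.castSucc⟩ <
          ptCl Δ ⟨f (d - ((i.succ : Fin (d+1)) : ℕ)), hmem i.succ⟩ := by
      intro i
      have hival : ((i.castSucc : Fin (d+1)) : ℕ) = (i : ℕ) := rfl
      have hival2 : ((i.succ : Fin (d+1)) : ℕ) = (i : ℕ) + 1 := rfl
      have h1 : d - ((i : ℕ) + 1) < d := by omega
      have h2 : d - ((i : ℕ) + 1) + 1 = d - (i : ℕ) := by omega
      have hs := hsteps (d - ((i : ℕ) + 1)) h1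
      rw [h2] at hs
      apply ptCl_lt
      · show IsFaceOf (f (d - ((i.succ : Fin (d+1)) : ℕ))) (f (d - ((i.castSucc : Fin (d+1)) : ℕ)))
        rw [hival, hival2]
        exact hs.1
      · show f (d - ((i.succ : Fin (d+1)) : ℕ)) ≠ f (d - ((i.castSucc : Fin (d+1)) : ℕ))
        rw [hival, hival2]
        intro he
        have e1 : dimCone (f (d - ((i : ℕ) + 1))) = d - ((i : ℕ) + 1) :=
          hdims _ (by omega)
        have e2 : dimCone (f (d - (i : ℕ))) = d - (i : ℕ) := hdims _ (by omega)
        rw [he, e2] at e1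
        omega
    set q : LTSeries (@TopologicalSpace.IrreducibleCloseds ↥Δ.cones Δ.topology) :=
      ⟨d, fun i => ptCl Δ ⟨f (d - (i : ℕ)), hmem i⟩, hstep2⟩ with hq
    have hlen := Order.LTSeries.length_le_krullDim q
    exact_mod_cast hlen

end Topology

end ToricFan

open ToricFan

/-- Let `Δ` be a finite fan on `N ⊗ ℝ`, `N = ℤ^r`, and let `Δ_top`
be the finite topological space whose points are the cones of `Δ` and whose open sets
are the subfans of `Δ`.  Then the dimension of `Δ_top`, the length of a maximal chain
of irreducible closed subsets (i.e. the topological Krull dimension), equals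
`max { dim σ | σ ∈ Δ }`; in particular `max { dim σ | σ ∈ Δ }` is a topological
invariant of `Δ`. -/
theorem dim_fan_topology_eq_max_dim_cone
    (r : ℕ) (Δ : Fan r) :
    (@topologicalKrullDim ↥Δ.cones Δ.topology =
      ⨆ σ : ↥Δ.cones, ((dimCone (σ : Set (Fin r → ℝ)) : ℕ∞) : WithBot ℕ∞)) ∧
    (∀ (r' : ℕ) (Δ' : Fan r'),
      Nonempty (@Homeomorph ↥Δ.cones ↥Δ'.cones Δ.topology Δ'.topology) →
      (⨆ σ : ↥Δ.cones, ((dimCone (σ : Set (Fin r → ℝ)) : ℕ∞) : WithBot ℕ∞)) =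
        ⨆ σ' : ↥Δ'.cones, ((dimCone (σ' : Set (Fin r' → ℝ)) : ℕ∞) : WithBot ℕ∞)) := by
  constructor
  · exact fan_krullDim_eq Δ
  · rintro r' Δ' ⟨e⟩
    rw [← fan_krullDim_eq Δ, ← fan_krullDim_eq Δ']
    exact @IsHomeomorph.topologicalKrullDim_eq _ _ Δ.topology Δ'.topology e
      (@Homeomorph.isHomeomorph _ _ Δ.topology Δ'.topology e)
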